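/- arXiv:2501.03025 — 5 statements merged into one kernel-verified Lean document; each statement's English description precedes it below -/
import Mathlib

section
/- Let C ⊆ ℝⁿ be a closed, pointed, full-dimensional convex cone, and let A ⊆ C and B ⊆ C* be subsets each of which spans ℝⁿ. Suppose there exist sets Ã ⊆ C, B̃ ⊆ C* and bijections g : A → Ã, q : B → B̃ with ⟨a, b⟩ = ⟨g(a), q(b)⟩ for all a ∈ A and b ∈ B. Then g and q extend to invertible linear maps on ℝⁿ, and q is the inverse of the adjoint of g. -/
open scoped InnerProductSpace

/-- The dual cone of a set in a real inner product space. -/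
def dualCone {n : ℕ} (C : Set (EuclideanSpace ℝ (Fin n))) : Set (EuclideanSpace ℝ (Fin n)) :=
  {y | ∀ x ∈ C, 0 ≤ ⟪x, y⟫_ℝ}

/-!
Extend `q` linearly from a basis contained in `B` to a map `Q`. The identity
`⟪g a, Q y⟫ = ⟪a, y⟫`, true for `y` in that basis, holds for all `y`; as `A` spans, it forces `Q`
to be injective, hence invertible. With `G = (Q⁻¹)†` one has `⟪G x, Q y⟫ = ⟪x, y⟫`, which
identifies `g` with `G` on `A` and then, again because `A` spans, `q` with `Q` on `B`.
-/

section

variable {E : Type*} [NormedAddCommGroup E] [InnerProductSpace ℝ E]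

open Submodule

theorem eq_of_forall_inner_eq_of_span_eq_top {A : Set E} (hA : span ℝ A = ⊤) {u v : E}
    (h : ∀ a ∈ A, ⟪a, u⟫_ℝ = ⟪a, v⟫_ℝ) : u = v :=
  ext_inner_left ℝ fun x => LinearMap.congr_fun
    (LinearMap.ext_on (f := (innerₗ E).flip u) (g := (innerₗ E).flip v) hA h) x

theorem exists_linearMap_inner_apply_eq {A B : Set E} (hB : span ℝ B = ⊤) {g q : E → E}
    (h : ∀ a ∈ A, ∀ b ∈ B, ⟪a, b⟫_ℝ = ⟪g a, q b⟫_ℝ) :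
    ∃ Q : E →ₗ[ℝ] E, ∀ a ∈ A, ∀ y, ⟪g a, Q y⟫_ℝ = ⟪a, y⟫_ℝ := by
  let b := Module.Basis.ofSpan hB.ge
  have hbB : ∀ i, b i ∈ B := fun i => Module.Basis.ofSpan_subset hB.ge ⟨i, rfl⟩
  refine ⟨b.constr ℝ (q ∘ b), fun a ha => ?_⟩
  have : (innerₗ E (g a)).comp (b.constr ℝ (q ∘ b)) = innerₗ E a :=
    b.ext fun i => by simp [(h a ha _ (hbB i)).symm]
  exact LinearMap.congr_fun this

theorem injective_of_forall_inner_apply_eq {A : Set E} (hA : span ℝ A = ⊤) {g : E → E}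
    {Q : E →ₗ[ℝ] E} (h : ∀ a ∈ A, ∀ y, ⟪g a, Q y⟫_ℝ = ⟪a, y⟫_ℝ) : Function.Injective Q := by
  refine (injective_iff_map_eq_zero Q).2 fun y hy => ?_
  exact eq_of_forall_inner_eq_of_span_eq_top hA fun a ha => by
    rw [← h a ha, hy, inner_zero_right, inner_zero_right]

variable [FiniteDimensional ℝ E]

theorem exists_linearEquiv_inner_apply_eq {A B : Set E}
    (hA : span ℝ A = ⊤) (hB : span ℝ B = ⊤) {g q : E → E}
    (h : ∀ a ∈ A, ∀ b ∈ B, ⟪a, b⟫_ℝ = ⟪g a, q b⟫_ℝ) :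
    ∃ Q : E ≃ₗ[ℝ] E, ∀ a ∈ A, ∀ y, ⟪g a, Q y⟫_ℝ = ⟪a, y⟫_ℝ := by
  obtain ⟨Q, hQ⟩ := exists_linearMap_inner_apply_eq hB h
  exact ⟨.ofInjectiveEndo Q (injective_of_forall_inner_apply_eq hA hQ), hQ⟩

noncomputable def LinearEquiv.adjoint (Q : E ≃ₗ[ℝ] E) : E ≃ₗ[ℝ] E :=
  LinearEquiv.ofLinearMap (LinearMap.adjoint Q.toLinearMap) (LinearMap.adjoint Q.symm.toLinearMap)
    (by rw [← LinearMap.adjoint_comp]; simp) (by rw [← LinearMap.adjoint_comp]; simp)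

end

theorem stmt_0_general {n : ℕ}
    (A B : Set (EuclideanSpace ℝ (Fin n)))
    (hAspan : Submodule.span ℝ A = ⊤) (hBspan : Submodule.span ℝ B = ⊤)
    (g q : EuclideanSpace ℝ (Fin n) → EuclideanSpace ℝ (Fin n))
    (hfact : ∀ a ∈ A, ∀ b ∈ B, ⟪a, b⟫_ℝ = ⟪g a, q b⟫_ℝ) :
    ∃ G Q : EuclideanSpace ℝ (Fin n) ≃ₗ[ℝ] EuclideanSpace ℝ (Fin n),
      Set.EqOn g G A ∧ Set.EqOn q Q B ∧
      (Q.toLinearMap).comp (LinearMap.adjoint G.toLinearMap) = LinearMap.id := by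
  obtain ⟨Q, hQ⟩ := exists_linearEquiv_inner_apply_eq hAspan hBspan hfact
  have hG : ∀ x y, ⟪Q.symm.adjoint x, y⟫_ℝ = ⟪x, Q.symm y⟫_ℝ := fun x y =>
    LinearMap.adjoint_inner_left _ _ _
  have hgG : Set.EqOn g Q.symm.adjoint A := fun a ha =>
    ext_inner_right ℝ fun z => by rw [hG, ← hQ a ha, Q.apply_symm_apply]
  refine ⟨Q.symm.adjoint, Q, hgG, fun b hb => ?_, ?_⟩
  · refine Q.symm.injective (eq_of_forall_inner_eq_of_span_eq_top hAspan fun a ha => ?_)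
    rw [← hG, ← hgG ha, ← hfact a ha b hb, Q.symm_apply_apply]
  · ext x
    simp [LinearEquiv.adjoint, LinearMap.adjoint_adjoint]

theorem stmt_0 {n : ℕ} (C : Set (EuclideanSpace ℝ (Fin n)))
    (hclosed : IsClosed C) (hconv : Convex ℝ C)
    (hcone : ∀ (c : ℝ), 0 < c → ∀ x ∈ C, c • x ∈ C)
    (hpointed : ∀ x ∈ C, -x ∈ C → x = 0)
    (hfull : (interior C).Nonempty)
    (A B : Set (EuclideanSpace ℝ (Fin n)))
    (hA : A ⊆ C) (hB : B ⊆ dualCone C)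
    (hAspan : Submodule.span ℝ A = ⊤) (hBspan : Submodule.span ℝ B = ⊤)
    (Atil Btil : Set (EuclideanSpace ℝ (Fin n)))
    (hAtil : Atil ⊆ C) (hBtil : Btil ⊆ dualCone C)
    (g q : EuclideanSpace ℝ (Fin n) → EuclideanSpace ℝ (Fin n))
    (hg : Set.BijOn g A Atil) (hq : Set.BijOn q B Btil)
    (hfact : ∀ a ∈ A, ∀ b ∈ B, ⟪a, b⟫_ℝ = ⟪g a, q b⟫_ℝ) :
    ∃ G Q : EuclideanSpace ℝ (Fin n) ≃ₗ[ℝ] EuclideanSpace ℝ (Fin n),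
      Set.EqOn g G A ∧ Set.EqOn q Q B ∧
      (Q.toLinearMap).comp (LinearMap.adjoint G.toLinearMap) = LinearMap.id :=
  stmt_0_general A B hAspan hBspan g q hfact
end

section
/- If g : ℝⁿ → ℝⁿ is an invertible linear map satisfying g(cone(A')) ⊆ C and q = (gᵀ)⁻¹ satisfies q(cone(B')) ⊆ C*, where cone(A') = C and cone(B') = C*, for a regular convex cone C, then g(C) = C, i.e., g is an automorphism of C, and q is an automorphism of C*. -/
/-!
With q = (gᵀ)⁻¹ one has q⁻¹ = gᵀ and ⟪y, g⁻¹ x⟫ = ⟪q y, x⟫. Hence q(C*) ⊆ C* says that g⁻¹ maps C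
into C** = C (bipolar theorem), and g(C) ⊆ C says that q⁻¹ maps C* into C*. A bijection that maps
a set into itself together with its inverse maps it onto itself.
-/

open scoped InnerProductSpace

/-- The closed conic hull of a set. -/
def coneHull {n : ℕ} (S : Set (EuclideanSpace ℝ (Fin n))) : Set (EuclideanSpace ℝ (Fin n)) :=
  closure {x | ∃ c : ℝ, 0 ≤ c ∧ ∃ y ∈ convexHull ℝ S, x = c • y}

lemma ConvexCone.coe_hull_eq_self {E : Type*} [AddCommGroup E] [Module ℝ E] {C : Set E}
    (hconv : Convex ℝ C) (hcone : ∀ c : ℝ, 0 < c → ∀ x ∈ C, c • x ∈ C) :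
    (ConvexCone.hull ℝ C : Set E) = C := by
  refine Set.Subset.antisymm (fun x hx => ?_) ConvexCone.subset_hull
  obtain ⟨r, hr, y, hy, rfl⟩ := (ConvexCone.mem_hull_of_convex hconv).1 hx
  exact hcone r hr y hy

lemma dualCone_dualCone {n : ℕ} {C : Set (EuclideanSpace ℝ (Fin n))}
    (hclosed : IsClosed C) (hconv : Convex ℝ C)
    (hcone : ∀ c : ℝ, 0 < c → ∀ x ∈ C, c • x ∈ C) (hne : C.Nonempty) :
    dualCone (dualCone C) = C := by
  have hK := ConvexCone.coe_hull_eq_self hconv hcone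
  have hK_ne : (ConvexCone.hull ℝ C : Set (EuclideanSpace ℝ (Fin n))).Nonempty := by rwa [hK]
  have hK_closed : IsClosed (ConvexCone.hull ℝ C : Set (EuclideanSpace ℝ (Fin n))) := by rwa [hK]
  obtain ⟨K, rfl⟩ : ∃ K : ProperCone ℝ (EuclideanSpace ℝ (Fin n)), (K : Set _) = C :=
    ⟨⟨(ConvexCone.hull ℝ C).toPointedCone (.of_nonempty_of_isClosed hK_ne hK_closed),
      hK_closed⟩, hK⟩
  exact congrArg SetLike.coe (ProperCone.innerDual_innerDual K)

section InverseAdjoint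

variable {n : ℕ} {g q : EuclideanSpace ℝ (Fin n) ≃ₗ[ℝ] EuclideanSpace ℝ (Fin n)}

lemma symm_apply_eq_adjoint_of_comp_adjoint
    (hq : q.toLinearMap.comp (LinearMap.adjoint g.toLinearMap) = LinearMap.id)
    (y : EuclideanSpace ℝ (Fin n)) : q.symm y = LinearMap.adjoint g.toLinearMap y := by
  rw [LinearEquiv.symm_apply_eq]
  exact (LinearMap.congr_fun hq y).symm

lemma inner_symm_apply_eq_of_comp_adjoint
    (hq : q.toLinearMap.comp (LinearMap.adjoint g.toLinearMap) = LinearMap.id)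
    (x y : EuclideanSpace ℝ (Fin n)) : ⟪y, g.symm x⟫_ℝ = ⟪q y, x⟫_ℝ := by
  conv_lhs => rw [← q.symm_apply_apply y, symm_apply_eq_adjoint_of_comp_adjoint hq]
  rw [LinearMap.adjoint_inner_left, LinearEquiv.coe_coe, LinearEquiv.apply_symm_apply]

end InverseAdjoint

lemma LinearEquiv.image_eq_of_mapsTo {R M : Type*} [Semiring R] [AddCommMonoid M] [Module R M]
    (e : M ≃ₗ[R] M) {s : Set M} (he : Set.MapsTo e s s) (he' : Set.MapsTo e.symm s s) :
    e '' s = s :=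
  (Set.RightInvOn.surjOn (fun x _ => e.apply_symm_apply x) he').image_eq_of_mapsTo he

theorem stmt_1_general {n : ℕ} (C : Set (EuclideanSpace ℝ (Fin n)))
    (hclosed : IsClosed C) (hconv : Convex ℝ C)
    (hcone : ∀ (c : ℝ), 0 < c → ∀ x ∈ C, c • x ∈ C)
    (hfull : (interior C).Nonempty)
    (A' B' : Set (EuclideanSpace ℝ (Fin n)))
    (hA' : coneHull A' = C) (hB' : coneHull B' = dualCone C)
    (g q : EuclideanSpace ℝ (Fin n) ≃ₗ[ℝ] EuclideanSpace ℝ (Fin n))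
    (hq : q.toLinearMap.comp (LinearMap.adjoint g.toLinearMap) = LinearMap.id)
    (hgA : ⇑g '' coneHull A' ⊆ C)
    (hqB : ⇑q '' coneHull B' ⊆ dualCone C) :
    ⇑g '' C = C ∧ ⇑q '' dualCone C = dualCone C := by
  rw [hA', ← Set.mapsTo_iff_image_subset] at hgA
  rw [hB', ← Set.mapsTo_iff_image_subset] at hqB
  have hg_symm : Set.MapsTo g.symm C C := by
    intro x hx
    rw [← dualCone_dualCone hclosed hconv hcone (hfull.mono interior_subset)]
    intro y hy
    rw [inner_symm_apply_eq_of_comp_adjoint hq, real_inner_comm]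
    exact hqB hy x hx
  have hq_symm : Set.MapsTo q.symm (dualCone C) (dualCone C) := by
    intro y hy x hx
    rw [symm_apply_eq_adjoint_of_comp_adjoint hq, LinearMap.adjoint_inner_right]
    exact hy (g x) (hgA hx)
  exact ⟨g.image_eq_of_mapsTo hgA hg_symm, q.image_eq_of_mapsTo hqB hq_symm⟩

theorem stmt_1 {n : ℕ} (C : Set (EuclideanSpace ℝ (Fin n)))
    (hclosed : IsClosed C) (hconv : Convex ℝ C)
    (hcone : ∀ (c : ℝ), 0 < c → ∀ x ∈ C, c • x ∈ C)
    (hpointed : ∀ x ∈ C, -x ∈ C → x = 0)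
    (hfull : (interior C).Nonempty)
    (A' B' : Set (EuclideanSpace ℝ (Fin n)))
    (hA' : coneHull A' = C) (hB' : coneHull B' = dualCone C)
    (g q : EuclideanSpace ℝ (Fin n) ≃ₗ[ℝ] EuclideanSpace ℝ (Fin n))
    (hq : q.toLinearMap.comp (LinearMap.adjoint g.toLinearMap) = LinearMap.id)
    (hgA : ⇑g '' coneHull A' ⊆ C)
    (hqB : ⇑q '' coneHull B' ⊆ dualCone C) :
    ⇑g '' C = C ∧ ⇑q '' dualCone C = dualCone C :=
  stmt_1_general C hclosed hconv hcone hfull A' B' hA' hB' g q hq hgA hqB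
end

section
/- Let C be a regular convex cone in ℝⁿ, A ⊆ C and B ⊆ C* compact sets with γ := sup_{a∈A,b∈B} ⟨a,b⟩ > 0, and M > 0 a bound with ‖a‖₂ ≤ M and ‖b‖₂ ≤ M for all a ∈ A, b ∈ B. Define A' := A ∪ {x ∈ C : ‖x‖₂ ≤ min(γ/M, √γ)} and B' := B ∪ {x ∈ C* : ‖x‖₂ ≤ min(γ/M, √γ)}. Then A' and B' are compact, cone(A') = C, cone(B') = C*, and sup_{a'∈A', b'∈B'} ⟨a',b'⟩ = γ. -/
open scoped InnerProductSpace

/-!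
Every point of a closed convex cone is a nonnegative multiple of one of its points of norm at
most `r`, so adjoining the cone's `r`-ball to a subset of the cone generates the whole cone. The
extra points cannot raise the supremum of the pairing: against a point of norm at most `M` a point
of norm at most `γ / M` pairs to at most `γ`, and two points of norm at most `√γ` pair to at most
`γ`.
-/

lemma IsClosed.isCompact_sep_norm_le {E : Type*} [NormedAddCommGroup E] [ProperSpace E]
    {D : Set E} (hclosed : IsClosed D) (r : ℝ) :
    IsCompact {x ∈ D | ‖x‖ ≤ r} :=
  (isCompact_closedBall (0 : E) r).of_isClosed_subset
    (hclosed.inter (_root_.isClosed_le continuous_norm continuous_const))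
    fun _ hx => mem_closedBall_zero_iff.mpr hx.2

section ConeGeometry

open Filter Topology

variable {E : Type*} [NormedAddCommGroup E] [NormedSpace ℝ E] {D : Set E}

lemma zero_mem_of_isClosed_of_smul_mem (hclosed : IsClosed D)
    (hcone : ∀ c : ℝ, 0 < c → ∀ x ∈ D, c • x ∈ D) {x : E} (hx : x ∈ D) : (0 : E) ∈ D := by
  have hlim : Tendsto (fun c : ℝ => c • x) (𝓝[>] 0) (𝓝 0) := by
    simpa using ((tendsto_id (x := 𝓝 (0 : ℝ))).smul_const x).mono_left nhdsWithin_le_nhds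
  exact hclosed.mem_of_tendsto hlim
    (eventually_nhdsWithin_of_forall fun c hc => hcone c hc x hx)

lemma exists_eq_smul_of_norm_le (hcone : ∀ c : ℝ, 0 < c → ∀ x ∈ D, c • x ∈ D)
    {x : E} (hx : x ∈ D) {r : ℝ} (hr : 0 < r) :
    ∃ c : ℝ, 0 ≤ c ∧ ∃ y ∈ D, ‖y‖ ≤ r ∧ x = c • y := by
  rcases eq_or_ne x 0 with rfl | hx0
  · exact ⟨1, zero_le_one, 0, hx, by simpa using hr.le, by simp⟩
  have hnx : 0 < ‖x‖ := norm_pos_iff.mpr hx0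
  refine ⟨‖x‖ / r, by positivity, (r / ‖x‖) • x, hcone _ (by positivity) x hx, ?_, ?_⟩
  · rw [norm_smul, Real.norm_of_nonneg (by positivity), div_mul_cancel₀ _ hnx.ne']
  · rw [smul_smul, show ‖x‖ / r * (r / ‖x‖) = 1 by field_simp, one_smul]

end ConeGeometry

section ConeHull

variable {n : ℕ} {D S : Set (EuclideanSpace ℝ (Fin n))}

lemma smul_mem_coneHull {c : ℝ} (hc : 0 ≤ c) {y : EuclideanSpace ℝ (Fin n)} (hy : y ∈ S) :
    c • y ∈ coneHull S :=
  subset_closure ⟨c, hc, y, subset_convexHull ℝ S hy, rfl⟩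

lemma coneHull_subset (hclosed : IsClosed D) (hconv : Convex ℝ D)
    (hcone : ∀ c : ℝ, 0 < c → ∀ x ∈ D, c • x ∈ D) (hS : S ⊆ D) : coneHull S ⊆ D := by
  refine closure_minimal ?_ hclosed
  rintro _ ⟨c, hc, y, hy, rfl⟩
  have hyD : y ∈ D := convexHull_min hS hconv hy
  rcases hc.eq_or_lt with rfl | hc
  · simpa using zero_mem_of_isClosed_of_smul_mem hclosed hcone hyD
  · exact hcone c hc y hyD

lemma coneHull_union_sep_norm_le (hclosed : IsClosed D) (hconv : Convex ℝ D)
    (hcone : ∀ c : ℝ, 0 < c → ∀ x ∈ D, c • x ∈ D) {T : Set (EuclideanSpace ℝ (Fin n))}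
    (hT : T ⊆ D) {r : ℝ} (hr : 0 < r) : coneHull (T ∪ {x ∈ D | ‖x‖ ≤ r}) = D := by
  refine (coneHull_subset hclosed hconv hcone (Set.union_subset hT (Set.sep_subset _ _))).antisymm
    fun x hx => ?_
  obtain ⟨c, hc, y, hyD, hyr, rfl⟩ := exists_eq_smul_of_norm_le hcone hx hr
  exact smul_mem_coneHull hc (Or.inr ⟨hyD, hyr⟩)

end ConeHull

section InnerSupremum

variable {E : Type*} [NormedAddCommGroup E] [InnerProductSpace ℝ E]

lemma real_inner_le_of_norm_le {a b : E} {p q : ℝ} (ha : ‖a‖ ≤ p) (hb : ‖b‖ ≤ q) :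
    ⟪a, b⟫_ℝ ≤ p * q :=
  (real_inner_le_norm a b).trans (mul_le_mul ha hb (norm_nonneg b) ((norm_nonneg a).trans ha))

lemma sSup_inner_union_eq {A B A₀ B₀ : Set E} {γ M : ℝ}
    (hγ : γ = sSup {r : ℝ | ∃ a ∈ A, ∃ b ∈ B, r = ⟪a, b⟫_ℝ}) (hγpos : 0 < γ) (hM : 0 < M)
    (hMA : ∀ a ∈ A, ‖a‖ ≤ M) (hMB : ∀ b ∈ B, ‖b‖ ≤ M)
    (hA₀ : ∀ a ∈ A₀, ‖a‖ ≤ min (γ / M) (Real.sqrt γ))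
    (hB₀ : ∀ b ∈ B₀, ‖b‖ ≤ min (γ / M) (Real.sqrt γ)) :
    sSup {r : ℝ | ∃ a ∈ A ∪ A₀, ∃ b ∈ B ∪ B₀, r = ⟪a, b⟫_ℝ} = γ := by
  set S := {r : ℝ | ∃ a ∈ A, ∃ b ∈ B, r = ⟪a, b⟫_ℝ}
  set S' := {r : ℝ | ∃ a ∈ A ∪ A₀, ∃ b ∈ B ∪ B₀, r = ⟪a, b⟫_ℝ}
  have hSS' : S ⊆ S' := fun _ ⟨a, ha, b, hb, hr⟩ => ⟨a, Or.inl ha, b, Or.inl hb, hr⟩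
  have hSne : S.Nonempty :=
    Set.nonempty_iff_ne_empty.mpr fun hS => hγpos.ne' (by rw [hγ, hS, Real.sSup_empty])
  have hSbdd : BddAbove S := ⟨M * M, by
    rintro _ ⟨a, ha, b, hb, rfl⟩
    exact real_inner_le_of_norm_le (hMA a ha) (hMB b hb)⟩
  have hS'le : ∀ r ∈ S', r ≤ γ := by
    rintro _ ⟨a, ha | ha, b, hb | hb, rfl⟩
    · exact hγ ▸ le_csSup hSbdd ⟨a, ha, b, hb, rfl⟩
    · calc ⟪a, b⟫_ℝ ≤ M * (γ / M) :=
            real_inner_le_of_norm_le (hMA a ha) ((hB₀ b hb).trans (min_le_left _ _))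
        _ = γ := mul_div_cancel₀ γ hM.ne'
    · calc ⟪a, b⟫_ℝ ≤ γ / M * M :=
            real_inner_le_of_norm_le ((hA₀ a ha).trans (min_le_left _ _)) (hMB b hb)
        _ = γ := div_mul_cancel₀ γ hM.ne'
    · calc ⟪a, b⟫_ℝ ≤ Real.sqrt γ * Real.sqrt γ :=
            real_inner_le_of_norm_le ((hA₀ a ha).trans (min_le_right _ _))
              ((hB₀ b hb).trans (min_le_right _ _))
        _ = γ := Real.mul_self_sqrt hγpos.le
  refine le_antisymm (csSup_le (hSne.mono hSS') hS'le) ?_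
  rw [hγ]
  exact csSup_le_csSup ⟨γ, hS'le⟩ hSne hSS'

end InnerSupremum

theorem stmt_3_general {n : ℕ} (C : Set (EuclideanSpace ℝ (Fin n)))
    (hclosed : IsClosed C) (hconv : Convex ℝ C)
    (hcone : ∀ (c : ℝ), 0 < c → ∀ x ∈ C, c • x ∈ C)
    (A B : Set (EuclideanSpace ℝ (Fin n)))
    (hA : A ⊆ C) (hB : B ⊆ dualCone C)
    (hAc : IsCompact A) (hBc : IsCompact B)
    (γ : ℝ) (hγ : γ = sSup {r : ℝ | ∃ a ∈ A, ∃ b ∈ B, r = ⟪a, b⟫_ℝ}) (hγpos : 0 < γ)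
    (M : ℝ) (hM : 0 < M)
    (hMA : ∀ a ∈ A, ‖a‖ ≤ M) (hMB : ∀ b ∈ B, ‖b‖ ≤ M) :
    IsCompact (A ∪ {x ∈ C | ‖x‖ ≤ min (γ / M) (Real.sqrt γ)}) ∧
    IsCompact (B ∪ {x ∈ dualCone C | ‖x‖ ≤ min (γ / M) (Real.sqrt γ)}) ∧
    coneHull (A ∪ {x ∈ C | ‖x‖ ≤ min (γ / M) (Real.sqrt γ)}) = C ∧
    coneHull (B ∪ {x ∈ dualCone C | ‖x‖ ≤ min (γ / M) (Real.sqrt γ)}) = dualCone C ∧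
    sSup {r : ℝ | ∃ a ∈ A ∪ {x ∈ C | ‖x‖ ≤ min (γ / M) (Real.sqrt γ)},
      ∃ b ∈ B ∪ {x ∈ dualCone C | ‖x‖ ≤ min (γ / M) (Real.sqrt γ)}, r = ⟪a, b⟫_ℝ} = γ := by
  have hρ : 0 < min (γ / M) (Real.sqrt γ) := lt_min (div_pos hγpos hM) (Real.sqrt_pos.mpr hγpos)
  -- `dualCone C` is definitionally the carrier of `ProperCone.innerDual C`.
  have hDclosed : IsClosed (dualCone C) := (ProperCone.innerDual C).isClosed
  have hDconv : Convex ℝ (dualCone C) := (ProperCone.innerDual C).convex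
  have hDcone : ∀ c : ℝ, 0 < c → ∀ y ∈ dualCone C, c • y ∈ dualCone C :=
    fun c hc y hy => (ProperCone.innerDual C).smul_mem hy hc.le
  exact ⟨hAc.union (hclosed.isCompact_sep_norm_le _), hBc.union (hDclosed.isCompact_sep_norm_le _),
    coneHull_union_sep_norm_le hclosed hconv hcone hA hρ,
    coneHull_union_sep_norm_le hDclosed hDconv hDcone hB hρ,
    sSup_inner_union_eq hγ hγpos hM hMA hMB (fun _ ha => ha.2) (fun _ hb => hb.2)⟩

theorem stmt_3 {n : ℕ} (C : Set (EuclideanSpace ℝ (Fin n)))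
    (hclosed : IsClosed C) (hconv : Convex ℝ C)
    (hcone : ∀ (c : ℝ), 0 < c → ∀ x ∈ C, c • x ∈ C)
    (hpointed : ∀ x ∈ C, -x ∈ C → x = 0)
    (hfull : (interior C).Nonempty)
    (A B : Set (EuclideanSpace ℝ (Fin n)))
    (hA : A ⊆ C) (hB : B ⊆ dualCone C)
    (hAc : IsCompact A) (hBc : IsCompact B)
    (γ : ℝ) (hγ : γ = sSup {r : ℝ | ∃ a ∈ A, ∃ b ∈ B, r = ⟪a, b⟫_ℝ}) (hγpos : 0 < γ)
    (M : ℝ) (hM : 0 < M)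
    (hMA : ∀ a ∈ A, ‖a‖ ≤ M) (hMB : ∀ b ∈ B, ‖b‖ ≤ M) :
    IsCompact (A ∪ {x ∈ C | ‖x‖ ≤ min (γ / M) (Real.sqrt γ)}) ∧
    IsCompact (B ∪ {x ∈ dualCone C | ‖x‖ ≤ min (γ / M) (Real.sqrt γ)}) ∧
    coneHull (A ∪ {x ∈ C | ‖x‖ ≤ min (γ / M) (Real.sqrt γ)}) = C ∧
    coneHull (B ∪ {x ∈ dualCone C | ‖x‖ ≤ min (γ / M) (Real.sqrt γ)}) = dualCone C ∧
    sSup {r : ℝ | ∃ a ∈ A ∪ {x ∈ C | ‖x‖ ≤ min (γ / M) (Real.sqrt γ)},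
      ∃ b ∈ B ∪ {x ∈ dualCone C | ‖x‖ ≤ min (γ / M) (Real.sqrt γ)}, r = ⟪a, b⟫_ℝ} = γ :=
  stmt_3_general C hclosed hconv hcone A B hA hB hAc hBc γ hγ hγpos M hM hMA hMB
end

section
/- Let C ⊆ ℝⁿ be a regular convex cone with dual C*. Suppose w̄ ∈ int(C), finite sets A ⊆ C, B ⊆ C*, nonnegative multipliers λ ∈ ℝ^A, μ ∈ ℝ^B with Σλ_a + Σμ_b = 1, KKT stationarity ∇²F(w̄)(Σ_a λ_a a) = Σ_b μ_b b, constraints ⟨−∇F(w̄), a⟩ ≤ t̄ (a ∈ A) and ⟨w̄, b⟩ ≤ t̄ (b ∈ B) with t̄ > 0, and complementary slackness λ_a > 0 ⟹ ⟨−∇F(w̄), a⟩ = t̄ and μ_b > 0 ⟹ ⟨w̄, b⟩ = t̄. If ∇²F(w̄)w̄ = −∇F(w̄) and ∇²F(w̄) is self-adjoint, then Σ_a λ_a = Σ_b μ_b = 1/2 and, setting a' := Σ_a λ_a a, b' := Σ_b μ_b b, one has ⟨−∇F(w̄), a'⟩ = ⟨w̄, b'⟩ = t̄/2 and ⟨∇²F(w̄)a',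 a'⟩ = ⟨a', b'⟩. -/
open scoped InnerProductSpace

theorem stmt_8 {n : ℕ} (C : Set (EuclideanSpace ℝ (Fin n)))
    (hclosed : IsClosed C) (hconv : Convex ℝ C)
    (hcone : ∀ (c : ℝ), 0 < c → ∀ x ∈ C, c • x ∈ C)
    (hpointed : ∀ x ∈ C, -x ∈ C → x = 0)
    (hfull : (interior C).Nonempty)
    (w : EuclideanSpace ℝ (Fin n)) (hw : w ∈ interior C)
    (A B : Finset (EuclideanSpace ℝ (Fin n)))
    (hA : ↑A ⊆ C) (hB : ↑B ⊆ dualCone C)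
    (gw : EuclideanSpace ℝ (Fin n))
    (Hw : EuclideanSpace ℝ (Fin n) →ₗ[ℝ] EuclideanSpace ℝ (Fin n))
    (hself : ∀ x y, ⟪Hw x, y⟫_ℝ = ⟪x, Hw y⟫_ℝ)
    (lam mu : EuclideanSpace ℝ (Fin n) → ℝ)
    (hlam : ∀ a ∈ A, 0 ≤ lam a) (hmu : ∀ b ∈ B, 0 ≤ mu b)
    (hsum : (∑ a ∈ A, lam a) + (∑ b ∈ B, mu b) = 1)
    (hstat : Hw (∑ a ∈ A, lam a • a) = ∑ b ∈ B, mu b • b)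
    (t : ℝ) (ht : 0 < t)
    (hfeasA : ∀ a ∈ A, ⟪-gw, a⟫_ℝ ≤ t) (hfeasB : ∀ b ∈ B, ⟪w, b⟫_ℝ ≤ t)
    (hcsA : ∀ a ∈ A, 0 < lam a → ⟪-gw, a⟫_ℝ = t)
    (hcsB : ∀ b ∈ B, 0 < mu b → ⟪w, b⟫_ℝ = t)
    (hlog : Hw w = -gw) :
    (∑ a ∈ A, lam a) = 1 / 2 ∧ (∑ b ∈ B, mu b) = 1 / 2 ∧
    ⟪-gw, ∑ a ∈ A, lam a • a⟫_ℝ = t / 2 ∧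
    ⟪w, ∑ b ∈ B, mu b • b⟫_ℝ = t / 2 ∧
    ⟪Hw (∑ a ∈ A, lam a • a), ∑ a ∈ A, lam a • a⟫_ℝ =
      ⟪∑ a ∈ A, lam a • a, ∑ b ∈ B, mu b • b⟫_ℝ := by

  have h1 : ⟪-gw, ∑ a ∈ A, lam a • a⟫_ℝ = t * ∑ a ∈ A, lam a := by
    rw [inner_sum, Finset.mul_sum]
    refine Finset.sum_congr rfl fun a ha => ?_
    rw [real_inner_smul_right]
    rcases eq_or_lt_of_le (hlam a ha) with h | h
    · rw [← h]; ring
    · rw [hcsA a ha h]; ring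
  have h2 : ⟪w, ∑ b ∈ B, mu b • b⟫_ℝ = t * ∑ b ∈ B, mu b := by
    rw [inner_sum, Finset.mul_sum]
    refine Finset.sum_congr rfl fun b hb => ?_
    rw [real_inner_smul_right]
    rcases eq_or_lt_of_le (hmu b hb) with h | h
    · rw [← h]; ring
    · rw [hcsB b hb h]; ring
  have h3 : ⟪-gw, ∑ a ∈ A, lam a • a⟫_ℝ = ⟪w, ∑ b ∈ B, mu b • b⟫_ℝ := by
    rw [← hlog, hself, hstat]
  have heq : (∑ a ∈ A, lam a) = ∑ b ∈ B, mu b := by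
    have := h3; rw [h1, h2] at this
    exact mul_left_cancel₀ (ne_of_gt ht) this
  have hS : (∑ a ∈ A, lam a) = 1 / 2 := by rw [heq] at hsum ⊢; linarith
  have hT : (∑ b ∈ B, mu b) = 1 / 2 := by rw [← heq]; exact hS
  refine ⟨hS, hT, ?_, ?_, ?_⟩
  · rw [h1, hS]; ring
  · rw [h2, hT]; ring
  · rw [hstat, real_inner_comm]
end

section
/- Let C := {x ∈ ℝ³ : x₁² + x₂² ≤ x₃², x₁ ≥ 0, x₃ ≥ 0}. For α > 0 and β ∈ ℝ, the linear map given by the matrix L(α,β) = α·[[1,0,0],[0,√(β²+1),β],[0,β,√(β²+1)]] is an automorphism of C, i.e., L(α,β)(C) = C. -/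
/-!
The matrix is `α • B β` with `B β` a Lorentz boost in the `(x₁, x₂)`-plane. A boost preserves
`x₂² - x₁²` and, on the cone, the sign of `x₂`; positive scaling preserves the cone. The inverse
`α⁻¹ • B (-β)` has the same form, so both it and the matrix map `C` into `C`, which gives equality.
-/

/-- The half second-order cone in ℝ³. -/
def halfSOC : Set (Fin 3 → ℝ) :=
  {x | x 0 ^ 2 + x 1 ^ 2 ≤ x 2 ^ 2 ∧ 0 ≤ x 0 ∧ 0 ≤ x 2}

open Matrix Set

noncomputable def lorentzBoost (β : ℝ) : Matrix (Fin 3) (Fin 3) ℝ :=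
  !![1, 0, 0;
     0, Real.sqrt (β ^ 2 + 1), β;
     0, β, Real.sqrt (β ^ 2 + 1)]

lemma lorentzBoost_mulVec (β : ℝ) (x : Fin 3 → ℝ) :
    lorentzBoost β *ᵥ x =
      ![x 0, Real.sqrt (β ^ 2 + 1) * x 1 + β * x 2, β * x 1 + Real.sqrt (β ^ 2 + 1) * x 2] := by
  ext i
  fin_cases i <;> simp [lorentzBoost, mulVec, dotProduct, Fin.sum_univ_three]

lemma lorentzBoost_mul_lorentzBoost_neg (β : ℝ) : lorentzBoost β * lorentzBoost (-β) = 1 := by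
  have hs : Real.sqrt (β ^ 2 + 1) ^ 2 = β ^ 2 + 1 := Real.sq_sqrt (by positivity)
  ext i j
  fin_cases i <;> fin_cases j <;>
    simp [lorentzBoost, mul_apply, Fin.sum_univ_three] <;> linarith

lemma lorentzBoost_mulVec_mem_halfSOC (β : ℝ) {x : Fin 3 → ℝ} (hx : x ∈ halfSOC) :
    lorentzBoost β *ᵥ x ∈ halfSOC := by
  obtain ⟨hcone, hx0, hx2⟩ := hx
  set s := Real.sqrt (β ^ 2 + 1)
  have hs : s ^ 2 = β ^ 2 + 1 := Real.sq_sqrt (by positivity)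
  -- `(β x₁)² ≤ β² x₂² < s² x₂²`, so the new last coordinate `β x₁ + s x₂` stays nonnegative.
  have hbound : -(s * x 2) ≤ β * x 1 :=
    (abs_le_of_sq_le_sq' (by nlinarith [sq_nonneg (x 0), sq_nonneg β, sq_nonneg (x 2)])
      (mul_nonneg (Real.sqrt_nonneg _) hx2)).1
  rw [lorentzBoost_mulVec]
  refine ⟨?_, hx0, ?_⟩ <;> simp only [cons_val]
  · -- The boost preserves `x₂² - x₁²` because `s² - β² = 1`.
    linear_combination hcone + (x 1 ^ 2 - x 2 ^ 2) * hs
  · linarith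

lemma smul_mem_halfSOC {c : ℝ} (hc : 0 ≤ c) {x : Fin 3 → ℝ} (hx : x ∈ halfSOC) :
    c • x ∈ halfSOC := by
  obtain ⟨hcone, hx0, hx2⟩ := hx
  refine ⟨?_, mul_nonneg hc hx0, mul_nonneg hc hx2⟩
  simp only [Pi.smul_apply, smul_eq_mul]
  nlinarith [mul_le_mul_of_nonneg_left hcone (sq_nonneg c)]

lemma smul_lorentzBoost_mulVec_mem_halfSOC {c : ℝ} (hc : 0 ≤ c) (β : ℝ) {x : Fin 3 → ℝ}
    (hx : x ∈ halfSOC) : (c • lorentzBoost β) *ᵥ x ∈ halfSOC := by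
  rw [smul_mulVec]
  exact smul_mem_halfSOC hc (lorentzBoost_mulVec_mem_halfSOC β hx)

theorem stmt_10 (α β : ℝ) (hα : 0 < α) :
    (fun x : Fin 3 → ℝ =>
        Matrix.mulVec
          (α • !![1, 0, 0;
                  0, Real.sqrt (β ^ 2 + 1), β;
                  0, β, Real.sqrt (β ^ 2 + 1)]) x) '' halfSOC = halfSOC := by
  change (fun x => (α • lorentzBoost β) *ᵥ x) '' halfSOC = halfSOC
  have hinv : RightInvOn (fun y => (α⁻¹ • lorentzBoost (-β)) *ᵥ y)
      (fun x => (α • lorentzBoost β) *ᵥ x) halfSOC := fun y _ => by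
    simp only [mulVec_mulVec, smul_mul, Matrix.mul_smul,
      lorentzBoost_mul_lorentzBoost_neg, smul_smul, inv_mul_cancel₀ hα.ne', one_smul,
      one_mulVec]
  refine (hinv.surjOn fun y hy => ?_).image_eq_of_mapsTo fun x hx => ?_
  · exact smul_lorentzBoost_mulVec_mem_halfSOC (inv_nonneg.2 hα.le) (-β) hy
  · exact smul_lorentzBoost_mulVec_mem_halfSOC hα.le β hx
end
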